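/- Let G = (V,→,⟷) be a topologic graph, k ∈ ℕ, c = (c_1,…,c_k) a configuration for k UAVs in G, and let G' be the extended topologic graph built from G, k and c. Let (d^0,…,d^ℓ) be a covering execution in G' with k UAVs, and let t* be the least time t such that some UAV is at s_k at time t. Then the configuration at time t* is (s_1,…,s_k) up to a permutation of the UAVs, and the configuration at time t*−1 is (c_1,…,c_k) up to a permutation of the UAVs. -/

import Mathlib

/-- A topologic graph: a finite set of regions with a base `B`, a move relation `→`
and a symmetric communication relation `⟷`, such that `B → B`. -/
structure TopGraph (V : Type) where
  base : V
  move : V → V → Prop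
  comm : V → V → Prop
  comm_symm : ∀ v w : V, comm v w → comm w v
  base_move : move base base

namespace TopGraph

variable {V : Type} {n : ℕ}

/-- The communication graph restricted to the occupied nodes together with the base is
connected: every occupied node is reachable from the base via communication edges whose
endpoints are occupied (or the base). -/
def ConnectedToBase (G : TopGraph V) (c : Fin n → V) : Prop :=
  ∀ i : Fin n,
    Relation.ReflTransGen
      (fun x y =>
        (x = G.base ∨ ∃ j, c j = x) ∧ (y = G.base ∨ ∃ j, c j = y) ∧ G.comm x y)
      G.base (c i)

/-- A configuration for `n` UAVs. -/
def IsConfig (G : TopGraph V) (c : Fin n → V) : Prop :=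
  G.ConnectedToBase c ∧ ∀ i j : Fin n, i ≠ j → c i ≠ G.base → c i ≠ c j

/-- An execution of length `ℓ` with `n` UAVs. -/
def IsExecution (G : TopGraph V) (n ℓ : ℕ) (d : ℕ → Fin n → V) : Prop :=
  (∀ t, t ≤ ℓ → G.IsConfig (d t)) ∧
  (∀ t, t < ℓ → ∀ i : Fin n, G.move (d t i) (d (t + 1) i))

/-- A covering execution: starts and ends with all UAVs at the base, and visits all nodes. -/
def IsCovering (G : TopGraph V) (n ℓ : ℕ) (d : ℕ → Fin n → V) : Prop :=
  G.IsExecution n ℓ d ∧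
  (∀ i, d 0 i = G.base) ∧ (∀ i, d ℓ i = G.base) ∧
  (∀ v : V, ∃ t, t ≤ ℓ ∧ ∃ i, d t i = v)

/-- A configuration is reachable if some execution from the all-base configuration ends in it. -/
def Reachable (G : TopGraph V) (c : Fin n → V) : Prop :=
  ∃ ℓ, ∃ d : ℕ → Fin n → V,
    G.IsExecution n ℓ d ∧ (∀ i, d 0 i = G.base) ∧ d ℓ = c

/-- Reachability by an execution of length at most `L`. -/
def ReachableIn (G : TopGraph V) (c : Fin n → V) (L : ℕ) : Prop :=
  ∃ ℓ, ℓ ≤ L ∧ ∃ d : ℕ → Fin n → V,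
    G.IsExecution n ℓ d ∧ (∀ i, d 0 i = G.base) ∧ d ℓ = c

/-- Neighbor-communicable: if a UAV can move from `v` to `v'`, then `v` and `v'` can communicate. -/
def NeighborCommunicable (G : TopGraph V) : Prop :=
  ∀ v w : V, G.move v w → G.comm v w

end TopGraph
/-! The extended topologic graph `G'` built from `G`, `k` and a configuration `c`.
Nodes: `Sum.inl u` for `u ∈ V`; `Sum.inr (Sum.inl i)` is `s_{i+1}`; `Sum.inr (Sum.inr i)` is `v_{i+1}`. -/

/-- Moves of the extended graph. -/
def extMove {V : Type} (G : TopGraph V) (k : ℕ) (c : Fin k → V) :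
    (V ⊕ (Fin k ⊕ Fin k)) → (V ⊕ (Fin k ⊕ Fin k)) → Prop := fun x y =>
  (∃ u u' : V, x = Sum.inl u ∧ y = Sum.inl u' ∧ G.move u u') ∨
  (∃ i : Fin k, x = Sum.inl (c i) ∧ y = Sum.inr (Sum.inl i)) ∨
  (∃ i : Fin k, x = Sum.inr (Sum.inl i) ∧ y = Sum.inr (Sum.inr i)) ∨
  (∃ (i : Fin k) (u : V), i.val = 0 ∧ x = Sum.inr (Sum.inr i) ∧ y = Sum.inl u) ∨
  (∃ (i : Fin k) (u : V), i.val = 0 ∧ x = Sum.inl u ∧ y = Sum.inr (Sum.inr i)) ∨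
  (∃ i : Fin k, x = Sum.inr (Sum.inr i) ∧ y = Sum.inl G.base) ∨
  (∃ i : Fin k, i.val = k - 1 ∧ x = Sum.inr (Sum.inr i) ∧ y = Sum.inr (Sum.inr i))

/-- One direction of the added communications of the extended graph. -/
def extComm0 {V : Type} (G : TopGraph V) (k : ℕ) :
    (V ⊕ (Fin k ⊕ Fin k)) → (V ⊕ (Fin k ⊕ Fin k)) → Prop := fun x y =>
  (∃ u u' : V, x = Sum.inl u ∧ y = Sum.inl u' ∧ G.comm u u') ∨
  (∃ i i' : Fin k, i'.val = i.val + 1 ∧ x = Sum.inr (Sum.inl i) ∧ y = Sum.inr (Sum.inl i')) ∨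
  (∃ i : Fin k, i.val = 0 ∧ x = Sum.inr (Sum.inl i) ∧ y = Sum.inl G.base) ∨
  (∃ i : Fin k, i.val = k - 1 ∧ x = Sum.inr (Sum.inr i))

/-- The extended topologic graph `G'` built from `G`, `k` and the configuration `c`. -/
def extGraph {V : Type} (G : TopGraph V) (k : ℕ) (c : Fin k → V) :
    TopGraph (V ⊕ (Fin k ⊕ Fin k)) where
  base := Sum.inl G.base
  move := extMove G k c
  comm := fun x y => extComm0 G k x y ∨ extComm0 G k y x
  comm_symm := fun _ _ h => h.symm
  base_move := Or.inl ⟨G.base, G.base, rfl, rfl, G.base_move⟩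

/-!
Before `t*` nobody is at `s_k`, and for `k ≥ 2` the node `v_k` can only be entered from `s_k` or
from itself, so at time `t*` nobody is at `v_k` (for `k = 1` the only UAV is at `s_1`). Without
`v_k`, the only communications of an `s_j` are with `s_{j-1}`, `s_{j+1}` and (for `j = 1`) `B`, so
connectivity at time `t*` forces every `s_m` with `m ≤ k` to be occupied. Since there are exactly
`k` UAVs, they occupy `s_1, …, s_k` bijectively, and `s_i` can only be entered from `c_i`.
-/

open Function Set

section ExtGraph

variable {V : Type} (G : TopGraph V) {k : ℕ} (c : Fin k → V)

abbrev sNode (j : Fin k) : V ⊕ (Fin k ⊕ Fin k) := Sum.inr (Sum.inl j)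

abbrev vNode (j : Fin k) : V ⊕ (Fin k ⊕ Fin k) := Sum.inr (Sum.inr j)

theorem extGraph_move_sNode_iff {x : V ⊕ (Fin k ⊕ Fin k)} {j : Fin k} :
    (extGraph G k c).move x (sNode j) ↔ x = Sum.inl (c j) := by
  constructor
  · rintro (⟨_, _, -, h, -⟩ | ⟨_, hx, h⟩ | ⟨_, -, h⟩ | ⟨_, _, -, -, h⟩ | ⟨_, _, -, -, h⟩ |
      ⟨_, -, h⟩ | ⟨_, -, -, h⟩) <;> simp_all
  · rintro rfl
    exact Or.inr (Or.inl ⟨j, rfl, rfl⟩)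

theorem extGraph_move_vNode {x : V ⊕ (Fin k ⊕ Fin k)} {j : Fin k} (hj : j.val ≠ 0)
    (h : (extGraph G k c).move x (vNode j)) : x = sNode j ∨ x = vNode j := by
  rcases h with ⟨_, _, -, h, -⟩ | ⟨_, -, h⟩ | ⟨_, hx, h⟩ | ⟨_, _, -, -, h⟩ | ⟨_, _, h0, -, h⟩ |
    ⟨_, -, h⟩ | ⟨_, -, hx, h⟩ <;> simp_all

theorem extGraph_comm_sNode {x : V ⊕ (Fin k ⊕ Fin k)} {j : Fin k}
    (h : (extGraph G k c).comm x (sNode j)) :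
    (x = (extGraph G k c).base ∧ j.val = 0) ∨
      (∃ j' : Fin k, x = sNode j' ∧ (j'.val + 1 = j.val ∨ j.val + 1 = j'.val)) ∨
      ∃ i : Fin k, i.val = k - 1 ∧ x = vNode i := by
  rcases h with (⟨_, _, -, h, -⟩ | ⟨j', _, hj, hx, h⟩ | ⟨_, -, -, h⟩ | ⟨i, hi, rfl⟩) |
    (⟨_, _, h, -, -⟩ | ⟨_, j', hj, h, rfl⟩ | ⟨_, hj, h, rfl⟩ | ⟨_, -, h⟩)
  · simp at h
  · obtain rfl : j = _ := by simpa using h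
    exact Or.inr (Or.inl ⟨j', hx, Or.inl hj.symm⟩)
  · simp at h
  · exact Or.inr (Or.inr ⟨i, hi, rfl⟩)
  · simp at h
  · obtain rfl : j = _ := by simpa using h
    exact Or.inr (Or.inl ⟨j', rfl, Or.inr hj.symm⟩)
  · obtain rfl : j = _ := by simpa using h
    exact Or.inl ⟨rfl, hj⟩
  · simp at h

theorem sNode_mem_range_of_le {e : Fin k → V ⊕ (Fin k ⊕ Fin k)}
    (hconn : (extGraph G k c).ConnectedToBase e)
    (hv : ∀ i : Fin k, i.val = k - 1 → vNode i ∉ range e)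
    {j : Fin k} (hj : sNode j ∈ range e) {m : Fin k} (hmj : m.val ≤ j.val) :
    sNode m ∈ range e := by
  obtain ⟨i, hi⟩ := hj
  have hpath := hconn i
  generalize e i = y at hpath hi
  induction hpath generalizing j m with
  | refl => simp [extGraph] at hi
  | tail _ hstep ih =>
    subst hi
    obtain ⟨hx, hy, hcomm⟩ := hstep
    have hyj : sNode j ∈ range e := hy.resolve_left (by simp [extGraph])
    rcases extGraph_comm_sNode G c hcomm with ⟨-, hj0⟩ | ⟨j', rfl, hj' | hj'⟩ | ⟨i, hi, rfl⟩
    · rwa [show m = j from Fin.ext (by omega)]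
    · rcases Nat.lt_or_ge m.val j.val with hlt | hge
      · exact ih (j := j') (by omega) rfl
      · rwa [show m = j from Fin.ext (by omega)]
    · exact ih (j := j') (by omega) rfl
    · exact absurd (hx.resolve_left (by simp [extGraph])) (hv i hi)

variable {ℓ : ℕ} {d : ℕ → Fin k → V ⊕ (Fin k ⊕ Fin k)}

theorem execution_ne_vNode_of_forall_lt_ne_sNode (hex : (extGraph G k c).IsExecution k ℓ d)
    (hstart : ∀ i, d 0 i = (extGraph G k c).base) {j : Fin k} (hj : j.val ≠ 0)
    {t : ℕ} (htℓ : t ≤ ℓ) (hs : ∀ t' < t, ∀ i, d t' i ≠ sNode j) (i : Fin k) :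
    d t i ≠ vNode j := by
  induction t generalizing i with
  | zero => simp [hstart, extGraph]
  | succ t ih =>
    intro hti
    have hmove := hex.2 t (by omega) i
    rw [hti] at hmove
    rcases extGraph_move_vNode G c hj hmove with h | h
    · exact hs t (by omega) i h
    · exact ih (by omega) (fun t' ht' => hs t' (by omega)) i h

end ExtGraph

theorem exists_perm_eq_comp_of_forall_mem_range {α β : Type*} [Finite α] {f g : α → β}
    (hg : Injective g) (h : ∀ a, g a ∈ range f) : ∃ σ : Equiv.Perm α, ∀ a, f a = g (σ a) := by
  choose w hw using h
  have hw_inj : Injective w := fun a b hab => hg <| by rw [← hw a, ← hw b, hab]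
  let e := Equiv.ofBijective w (Finite.injective_iff_bijective.mp hw_inj)
  exact ⟨e.symm, fun a => by rw [← hw]; exact congrArg f (e.apply_symm_apply a).symm⟩

theorem at_first_sk_configurations_general {V : Type} (G : TopGraph V) (k : ℕ)
    (c : Fin k → V)
    (ℓ : ℕ) (d : ℕ → Fin k → (V ⊕ (Fin k ⊕ Fin k)))
    (hd : (extGraph G k c).IsCovering k ℓ d)
    (tstar : ℕ) (htle : tstar ≤ ℓ)
    (hat : ∃ i j : Fin k, j.val = k - 1 ∧ d tstar i = Sum.inr (Sum.inl j))
    (hmin : ∀ t < tstar, ¬ ∃ i j : Fin k, j.val = k - 1 ∧ d t i = Sum.inr (Sum.inl j)) :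
    (∃ σ : Equiv.Perm (Fin k), ∀ i, d tstar i = Sum.inr (Sum.inl (σ i))) ∧
    (∃ σ : Equiv.Perm (Fin k), ∀ i, d (tstar - 1) i = Sum.inl (c (σ i))) := by
  obtain ⟨hex, hstart, -, -⟩ := hd
  obtain ⟨i₀, j₀, hj₀, hi₀⟩ := hat
  have htpos : 0 < tstar := Nat.pos_of_ne_zero fun h => by simp [h, hstart, extGraph] at hi₀
  have hv : ∀ i : Fin k, i.val = k - 1 → vNode i ∉ range (d tstar) := by
    rintro i hi ⟨i', hi'⟩
    obtain rfl : i = j₀ := Fin.ext (by omega)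
    rcases Nat.lt_or_ge 1 k with hk | hk
    · exact execution_ne_vNode_of_forall_lt_ne_sNode G c hex hstart (by omega) htle
        (fun t ht i'' h => hmin t ht ⟨i'', i, hi, h⟩) i' hi'
    · rw [show i' = i₀ from Fin.ext (by omega), hi₀] at hi'
      simp at hi'
  have hall (m : Fin k) : sNode m ∈ range (d tstar) :=
    sNode_mem_range_of_le G c (hex.1 tstar htle).1 hv ⟨i₀, hi₀⟩ (by omega)
  obtain ⟨σ, hσ⟩ := exists_perm_eq_comp_of_forall_mem_range (fun _ _ h => by simpa using h) hall
  refine ⟨⟨σ, hσ⟩, σ, fun i => ?_⟩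
  have hmove := hex.2 (tstar - 1) (by omega) i
  rw [Nat.sub_add_cancel htpos, hσ i] at hmove
  exact (extGraph_move_sNode_iff G c).1 hmove

/-- in a covering execution of the extended graph `G'`, at the first time
`t*` at which some UAV is at `s_k` the configuration is `(s_1, …, s_k)` up to a
permutation, and at time `t* - 1` it is `(c_1, …, c_k)` up to a permutation. -/
theorem at_first_sk_configurations {V : Type} [Fintype V] (G : TopGraph V) (k : ℕ)
    (c : Fin k → V) (hc : G.IsConfig c)
    (ℓ : ℕ) (d : ℕ → Fin k → (V ⊕ (Fin k ⊕ Fin k)))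
    (hd : (extGraph G k c).IsCovering k ℓ d)
    (tstar : ℕ) (htle : tstar ≤ ℓ)
    (hat : ∃ i j : Fin k, j.val = k - 1 ∧ d tstar i = Sum.inr (Sum.inl j))
    (hmin : ∀ t < tstar, ¬ ∃ i j : Fin k, j.val = k - 1 ∧ d t i = Sum.inr (Sum.inl j)) :
    (∃ σ : Equiv.Perm (Fin k), ∀ i, d tstar i = Sum.inr (Sum.inl (σ i))) ∧
    (∃ σ : Equiv.Perm (Fin k), ∀ i, d (tstar - 1) i = Sum.inl (c (σ i))) :=
  at_first_sk_configurations_general G k c ℓ d hd tstar htle hat hmin
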